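/- Let G = ({u0,u1}, A) be a two-player game with common finite action set A of size n ≥ 2 and utilities u0, u1 : A × A → [0,1]. Suppose G admits a mixed strategy profile x* that is a Nash equilibrium and is ε_ef-envy-proof for some ε_ef ≥ 0. Then for every ε with 0 < ε < 1 and every integer k ≥ 3 ln n / ε², there exists a k-uniform mixed strategy profile that is an ε-Nash equilibrium of G and is (2ε + ε_ef)-envy-proof in G. -/

import Mathlib

open Finset

variable {α β : Type*}

/-- Expected utility of `u` under the product of mixed strategies `p` and `q`. -/
def EU [Fintype α] [Fintype β] (u : α → β → ℝ) (p : α → ℝ) (q : β → ℝ) : ℝ :=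
  ∑ a, ∑ b, p a * q b * u a b

/-- `p` is a probability distribution (mixed strategy). -/
def IsMixed [Fintype α] (p : α → ℝ) : Prop :=
  (∀ a, 0 ≤ p a) ∧ ∑ a, p a = 1

/-- The pure action `a` viewed as a mixed strategy. -/
def pureStrat [DecidableEq α] (a : α) : α → ℝ :=
  fun a' => if a' = a then 1 else 0

/-- `(p,q)` is a Nash equilibrium of the two-player game `({u0,u1},{α,β})`. -/
def IsNash [Fintype α] [Fintype β] [DecidableEq α] [DecidableEq β]
    (u0 u1 : α → β → ℝ) (p : α → ℝ) (q : β → ℝ) : Prop :=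
  (∀ a' : α, EU u0 (pureStrat a') q ≤ EU u0 p q) ∧
  (∀ b' : β, EU u1 p (pureStrat b') ≤ EU u1 p q)

/-- `(p,q)` is immune in the two-player game `({u0,u1},{α,β})`. -/
def IsImmune [Fintype α] [Fintype β] [DecidableEq α] [DecidableEq β]
    (u0 u1 : α → β → ℝ) (p : α → ℝ) (q : β → ℝ) : Prop :=
  (∀ a' : α, EU u1 (pureStrat a') q ≥ EU u1 p q) ∧
  (∀ b' : β, EU u0 p (pureStrat b') ≥ EU u0 p q)

/-- `(p,q)` is envy-proof in the two-player game `({u0,u1},{α,β})`. -/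
def IsEnvyProof [Fintype α] [Fintype β] [DecidableEq α] [DecidableEq β]
    (u0 u1 : α → β → ℝ) (p : α → ℝ) (q : β → ℝ) : Prop :=
  (∀ a' : α, EU u0 (pureStrat a') q - EU u0 p q ≤ EU u1 (pureStrat a') q - EU u1 p q) ∧
  (∀ b' : β, EU u1 p (pureStrat b') - EU u1 p q ≤ EU u0 p (pureStrat b') - EU u0 p q)

/-- `(p,q)` is an ε-Nash equilibrium of the two-player game `({u0,u1},{α,β})`. -/
def IsEpsNash [Fintype α] [Fintype β] [DecidableEq α] [DecidableEq β]
    (u0 u1 : α → β → ℝ) (ε : ℝ) (p : α → ℝ) (q : β → ℝ) : Prop :=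
  (∀ a' : α, EU u0 (pureStrat a') q ≤ EU u0 p q + ε) ∧
  (∀ b' : β, EU u1 p (pureStrat b') ≤ EU u1 p q + ε)

/-- `(p,q)` is ε-envy-proof in the two-player game `({u0,u1},{α,β})`. -/
def IsEpsEnvyProof [Fintype α] [Fintype β] [DecidableEq α] [DecidableEq β]
    (u0 u1 : α → β → ℝ) (ε : ℝ) (p : α → ℝ) (q : β → ℝ) : Prop :=
  (∀ a' : α, EU u0 (pureStrat a') q - EU u0 p q ≤ EU u1 (pureStrat a') q - EU u1 p q + ε) ∧
  (∀ b' : β, EU u1 p (pureStrat b') - EU u1 p q ≤ EU u0 p (pureStrat b') - EU u0 p q + ε)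

/-- A mixed strategy is `k`-uniform if it is the uniform distribution over a multiset
of `k` pure actions, i.e. every probability is an integer multiple of `1/k`. -/
def KUniform [Fintype α] (k : ℕ) (p : α → ℝ) : Prop :=
  ∀ a : α, ∃ j : ℕ, p a = (j : ℝ) / k

/-! Every action in the support of a Nash strategy is a best response, so a strategy supported
inside the support of `p₀` earns the equilibrium payoff against `q₀`. It therefore suffices to
find `k`-uniform `p` and `q`, supported inside the supports of `p₀` and `q₀`, that move every
pure-action payoff by at most `ε/2` (`IsPayoffApprox`); Nash and envy-proofness then degrade by
`ε` and `2ε`.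

For `n ≥ 10`, averaging `k` i.i.d. samples works with positive probability: by Hoeffding's
inequality each of the `3n` relevant deviations has probability at most
`exp (-k ε² / 2) ≤ n ^ (-3/2)`, and `3n · n ^ (-3/2) < 1`. For `n ≤ 9` one has
`n ≤ 6 ln n ≤ 2kε`, and largest-remainder rounding, which is within `ℓ¹`-distance `n/(2k)`,
already suffices. -/

open Real

section Payoffs

variable [Fintype α] [Fintype β]

lemma EU_flip (u : α → β → ℝ) (p : α → ℝ) (q : β → ℝ) : EU (flip u) q p = EU u p q := by
  rw [EU, EU, sum_comm]
  simp only [flip, mul_comm (q _)]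

lemma EU_pureStrat_left [DecidableEq α] (u : α → β → ℝ) (a : α) (q : β → ℝ) :
    EU u (pureStrat a) q = ∑ b, q b * u a b := by
  simp [EU, pureStrat]

lemma EU_eq_sum_left [DecidableEq α] (u : α → β → ℝ) (p : α → ℝ) (q : β → ℝ) :
    EU u p q = ∑ a, p a * EU u (pureStrat a) q := by
  rw [EU]
  simp only [EU_pureStrat_left, mul_sum, mul_assoc]

lemma abs_EU_sub_le [DecidableEq α] {u : α → β → ℝ} {p : α → ℝ} (hp : IsMixed p)
    {q q' : β → ℝ} {δ : ℝ} (h : ∀ a, |EU u (pureStrat a) q - EU u (pureStrat a) q'| ≤ δ) :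
    |EU u p q - EU u p q'| ≤ δ := by
  rw [EU_eq_sum_left u p q, EU_eq_sum_left u p q', ← sum_sub_distrib]
  calc |∑ a, (p a * EU u (pureStrat a) q - p a * EU u (pureStrat a) q')|
      ≤ ∑ a, p a * |EU u (pureStrat a) q - EU u (pureStrat a) q'| := by
        refine (abs_sum_le_sum_abs _ _).trans_eq (sum_congr rfl fun a _ => ?_)
        rw [← mul_sub, abs_mul, abs_of_nonneg (hp.1 a)]
    _ ≤ ∑ a, p a * δ := sum_le_sum fun a _ => mul_le_mul_of_nonneg_left (h a) (hp.1 a)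
    _ = δ := by rw [← sum_mul, hp.2, one_mul]

lemma abs_sum_mul_sub_sum_mul_le {x y g : β → ℝ} (hx : ∑ b, x b = 1) (hy : ∑ b, y b = 1)
    (hg : ∀ b, g b ∈ Set.Icc (0 : ℝ) 1) :
    |∑ b, x b * g b - ∑ b, y b * g b| ≤ (∑ b, |x b - y b|) / 2 := by
  -- `x - y` has total mass zero, so `g` may be recentred to `g - 1/2`, of absolute value `≤ 1/2`.
  have hshift : ∑ b, x b * g b - ∑ b, y b * g b = ∑ b, (x b - y b) * (g b - 1 / 2) := by
    simp only [sub_mul, mul_sub, sum_sub_distrib, ← sum_mul, hx, hy]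
    ring
  rw [hshift, sum_div]
  refine (abs_sum_le_sum_abs _ _).trans (sum_le_sum fun b _ => ?_)
  have hg' : |g b - 1 / 2| ≤ 1 / 2 := abs_le.2 ⟨by linarith [(hg b).1], by linarith [(hg b).2]⟩
  rw [abs_mul]
  nlinarith [abs_nonneg (x b - y b)]

end Payoffs

section Equilibria

variable [Fintype α] [Fintype β] [DecidableEq α] [DecidableEq β]

lemma IsNash.flip {u0 u1 : α → β → ℝ} {p : α → ℝ} {q : β → ℝ} (h : IsNash u0 u1 p q) :
    IsNash (flip u1) (flip u0) q p :=
  ⟨fun b => by simpa only [EU_flip] using h.2 b, fun a => by simpa only [EU_flip] using h.1 a⟩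

lemma IsNash.EU_pureStrat_eq {u0 u1 : α → β → ℝ} {p : α → ℝ} {q : β → ℝ}
    (h : IsNash u0 u1 p q) (hp : IsMixed p) {a : α} (ha : p a ≠ 0) :
    EU u0 (pureStrat a) q = EU u0 p q := by
  have hsum : ∑ a', p a' * (EU u0 p q - EU u0 (pureStrat a') q) = 0 := by
    simp only [mul_sub, sum_sub_distrib, ← sum_mul, hp.2, one_mul, ← EU_eq_sum_left, sub_self]
  have hterm := (sum_eq_zero_iff_of_nonneg fun a' _ =>
    mul_nonneg (hp.1 a') (sub_nonneg.2 (h.1 a'))).1 hsum a (mem_univ a)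
  linarith [(mul_eq_zero.1 hterm).resolve_left ha]

lemma IsNash.EU_eq_of_support {u0 u1 : α → β → ℝ} {p₀ p : α → ℝ} {q₀ : β → ℝ}
    (h : IsNash u0 u1 p₀ q₀) (hp₀ : IsMixed p₀) (hp : IsMixed p)
    (hsupp : ∀ a, p₀ a = 0 → p a = 0) : EU u0 p q₀ = EU u0 p₀ q₀ := by
  rw [EU_eq_sum_left u0 p]
  calc ∑ a, p a * EU u0 (pureStrat a) q₀ = ∑ a, p a * EU u0 p₀ q₀ := by
        refine sum_congr rfl fun a _ => ?_
        by_cases ha : p₀ a = 0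
        · rw [hsupp a ha, zero_mul, zero_mul]
        · rw [h.EU_pureStrat_eq hp₀ ha]
    _ = EU u0 p₀ q₀ := by rw [← sum_mul, hp.2, one_mul]

/-- `q` and `q₀` are column strategies; `u` and `v` are the payoffs of the row and the column
player. -/
def IsPayoffApprox (u v : α → β → ℝ) (δ : ℝ) (q₀ q : β → ℝ) : Prop :=
  (∀ b, q₀ b = 0 → q b = 0) ∧
    ∀ a, |EU u (pureStrat a) q - EU u (pureStrat a) q₀| ≤ δ ∧
      EU v (pureStrat a) q₀ - δ ≤ EU v (pureStrat a) q

lemma isEpsNash_and_isEpsEnvyProof_of_isPayoffApprox {u0 u1 : α → β → ℝ} {εef ε : ℝ}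
    {p₀ p : α → ℝ} {q₀ q : β → ℝ} (hp₀ : IsMixed p₀) (hq₀ : IsMixed q₀) (hp : IsMixed p)
    (hq : IsMixed q) (hNash : IsNash u0 u1 p₀ q₀) (hEP : IsEpsEnvyProof u0 u1 εef p₀ q₀)
    (hpA : IsPayoffApprox (flip u1) (flip u0) (ε / 2) p₀ p)
    (hqA : IsPayoffApprox u0 u1 (ε / 2) q₀ q) :
    IsEpsNash u0 u1 ε p q ∧ IsEpsEnvyProof u0 u1 (2 * ε + εef) p q := by
  have h0 : |EU u0 p q - EU u0 p₀ q₀| ≤ ε / 2 := by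
    rw [← hNash.EU_eq_of_support hp₀ hp hpA.1]
    exact abs_EU_sub_le hp fun a => (hqA.2 a).1
  have h1 : |EU u1 p q - EU u1 p₀ q₀| ≤ ε / 2 := by
    rw [← EU_flip u1 p q, ← EU_flip u1 p₀ q₀, ← hNash.flip.EU_eq_of_support hq₀ hq hqA.1]
    exact abs_EU_sub_le hq fun b => (hpA.2 b).1
  have hrow (a : α) := hqA.2 a
  have hcol (b : β) := hpA.2 b
  simp only [EU_flip, abs_le] at h0 h1 hrow hcol
  refine ⟨⟨fun a => ?_, fun b => ?_⟩, fun a => ?_, fun b => ?_⟩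
  · linarith [hNash.1 a, hrow a]
  · linarith [hNash.2 b, hcol b]
  · linarith [hEP.1 a, hrow a]
  · linarith [hEP.2 b, hcol b]

end Equilibria

section Rounding

lemma Finset.exists_subset_card_eq_mul_sum_le {ι : Type*} (s : Finset ι) (f : ι → ℝ) {R : ℕ}
    (hR : R ≤ #s) : ∃ t ⊆ s, #t = R ∧ R * ∑ i ∈ s, f i ≤ #s * ∑ i ∈ t, f i := by
  classical
  -- Take `t` of maximal weight: no exchange improves it, so `f` is larger on `t` than off it.
  obtain ⟨t, ht, hmax⟩ := (powersetCard R s).exists_max_image (fun t => ∑ i ∈ t, f i)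
    (powersetCard_nonempty.2 hR)
  obtain ⟨hts, htR⟩ := mem_powersetCard.1 ht
  have hexch : ∀ b ∈ s \ t, ∀ a ∈ t, f b ≤ f a := by
    intro b hb a ha
    obtain ⟨hbs, hbt⟩ := mem_sdiff.1 hb
    have hbt' : b ∉ t.erase a := fun h => hbt (mem_of_mem_erase h)
    have := hmax (insert b (t.erase a)) (mem_powersetCard.2
      ⟨insert_subset hbs ((erase_subset a t).trans hts), by
        rw [card_insert_of_notMem hbt', card_erase_of_mem ha, htR]
        have : 0 < R := htR ▸ card_pos.2 ⟨a, ha⟩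
        omega⟩)
    rw [sum_insert hbt', sum_erase_eq_sub ha] at this
    linarith
  have hpairs : 0 ≤ ∑ b ∈ s \ t, ∑ a ∈ t, (f a - f b) :=
    sum_nonneg fun b hb => sum_nonneg fun a ha => sub_nonneg.2 (hexch b hb a ha)
  simp only [sum_sub_distrib, sum_const, nsmul_eq_mul, ← mul_sum] at hpairs
  rw [card_sdiff_of_subset hts, htR, Nat.cast_sub hR] at hpairs
  refine ⟨t, hts, htR, ?_⟩
  rw [← sum_sdiff hts]
  nlinarith

variable [Fintype β]

/-- Largest-remainder rounding of nonnegative reals with integral sum. -/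
lemma exists_nat_sum_eq_sum_abs_sub_le (x : β → ℝ) (hx : ∀ b, 0 ≤ x b) {k : ℕ}
    (hsum : ∑ b, x b = k) : ∃ m : β → ℕ, ∑ b, m b = k ∧ (∀ b, x b = 0 → m b = 0) ∧
      ∑ b, |(m b : ℝ) - x b| ≤ Fintype.card β / 2 := by
  classical
  set r : β → ℝ := fun b => x b - ⌊x b⌋₊
  have hr0 (b : β) : 0 ≤ r b := sub_nonneg.2 (Nat.floor_le (hx b))
  have hr1 (b : β) : r b ≤ 1 := by
    have := Nat.lt_floor_add_one (x b)
    simp only [r]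
    linarith
  have hfloor : ∑ b, ⌊x b⌋₊ ≤ k := by
    have : ((∑ b, ⌊x b⌋₊ : ℕ) : ℝ) ≤ k := by
      push_cast
      rw [← hsum]
      exact sum_le_sum fun b _ => Nat.floor_le (hx b)
    exact_mod_cast this
  set R := k - ∑ b, ⌊x b⌋₊
  set P := ({b | 0 < r b} : Finset β)
  have hr : ∑ b, r b = R := by
    simp only [r, sum_sub_distrib, hsum, R, Nat.cast_sub hfloor, Nat.cast_sum]
  have hrP : ∑ b ∈ P, r b = ∑ b, r b := sum_filter_of_ne fun b _ h => (hr0 b).lt_of_ne' h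
  have hRP : R ≤ #P := by
    have : (R : ℝ) ≤ #P := by
      rw [← hr, ← hrP, card_eq_sum_ones, Nat.cast_sum, Nat.cast_one]
      exact sum_le_sum fun b _ => hr1 b
    exact_mod_cast this
  obtain ⟨S, hSP, hSR, hSavg⟩ := P.exists_subset_card_eq_mul_sum_le r hRP
  refine ⟨fun b => ⌊x b⌋₊ + if b ∈ S then 1 else 0, ?_, fun b hb => ?_, ?_⟩
  · rw [sum_add_distrib, sum_boole, filter_mem_eq_inter, univ_inter, hSR]
    exact Nat.add_sub_of_le hfloor
  · have hbS : b ∉ S := fun h => by simpa [P, r, hb] using hSP h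
    simp [hb, hbS]
  · have habs (b : β) : |((⌊x b⌋₊ + if b ∈ S then 1 else 0 : ℕ) : ℝ) - x b|
        = r b + if b ∈ S then 1 - 2 * r b else 0 := by
      by_cases hb : b ∈ S
      · simp only [hb, if_true, Nat.cast_add, Nat.cast_one]
        rw [abs_of_nonneg (by linarith [hr1 b])]
        simp only [r]
        ring
      · simp only [hb, if_false, add_zero]
        rw [abs_sub_comm, abs_of_nonneg (hr0 b)]
    simp only [habs, sum_add_distrib, sum_ite_mem, univ_inter, sum_sub_distrib, sum_const,
      nsmul_eq_mul, mul_one, ← mul_sum, hSR, hr]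
    rw [hrP, hr] at hSavg
    have hPn : (#P : ℝ) ≤ Fintype.card β := by exact_mod_cast card_le_univ P
    have hS0 : 0 ≤ ∑ b ∈ S, r b := sum_nonneg fun b _ => hr0 b
    have hRP' : (R : ℝ) ≤ #P := by exact_mod_cast hRP
    -- `c (4R - 4s) ≤ 4cR - 4R² ≤ c²`, where `c = #P` and `s` is the remainder mass of `S`.
    have hc : (#P : ℝ) * (4 * R - 4 * ∑ b ∈ S, r b) ≤ #P * #P := by
      nlinarith [sq_nonneg ((#P : ℝ) - 2 * R)]
    rcases (Nat.cast_nonneg (#P) : (0 : ℝ) ≤ #P).eq_or_lt with hP | hP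
    · linarith
    · linarith [le_of_mul_le_mul_left hc hP]

lemma IsMixed.exists_kUniform_sum_abs_sub_le {ρ : β → ℝ} (hρ : IsMixed ρ) {k : ℕ}
    (hk : 0 < k) : ∃ q : β → ℝ, IsMixed q ∧ KUniform k q ∧ (∀ b, ρ b = 0 → q b = 0) ∧
      ∑ b, |q b - ρ b| ≤ Fintype.card β / (2 * k) := by
  have hk' : (0 : ℝ) < k := by exact_mod_cast hk
  obtain ⟨m, hm, hsupp, hdist⟩ := exists_nat_sum_eq_sum_abs_sub_le (fun b => k * ρ b)
    (fun b => mul_nonneg hk'.le (hρ.1 b)) (by rw [← mul_sum, hρ.2, mul_one])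
  refine ⟨fun b => m b / k, ⟨fun b => by positivity, ?_⟩, fun b => ⟨m b, rfl⟩,
    fun b hb => by simp [hsupp b (by simp [hb])], ?_⟩
  · rw [← sum_div, ← Nat.cast_sum, hm, div_self hk'.ne']
  · have hterm (b : β) : |(m b : ℝ) / k - ρ b| = |(m b : ℝ) - k * ρ b| / k := by
      rw [← abs_of_pos hk', ← abs_div, abs_of_pos hk', sub_div, mul_div_cancel_left₀ _ hk'.ne']
    rw [sum_congr rfl fun b _ => hterm b, ← sum_div, div_le_div_iff₀ hk' (by positivity)]
    nlinarith

end Rounding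

lemma exists_kUniform_isPayoffApprox_of_card_le [Fintype α] [Fintype β] [DecidableEq α]
    {u v : α → β → ℝ} (hu : ∀ a b, u a b ∈ Set.Icc (0 : ℝ) 1)
    (hv : ∀ a b, v a b ∈ Set.Icc (0 : ℝ) 1) {q₀ : β → ℝ} (hq₀ : IsMixed q₀) {k : ℕ} (hk : 0 < k)
    {δ : ℝ} (hcard : (Fintype.card β : ℝ) ≤ 4 * k * δ) :
    ∃ q, IsMixed q ∧ KUniform k q ∧ IsPayoffApprox u v δ q₀ q := by
  obtain ⟨q, hq, hqk, hsupp, hdist⟩ := hq₀.exists_kUniform_sum_abs_sub_le hk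
  have hk' : (0 : ℝ) < k := by exact_mod_cast hk
  have hclose {w : α → β → ℝ} (hw : ∀ a b, w a b ∈ Set.Icc (0 : ℝ) 1) (a : α) :
      |EU w (pureStrat a) q - EU w (pureStrat a) q₀| ≤ δ := by
    rw [EU_pureStrat_left, EU_pureStrat_left]
    refine (abs_sum_mul_sub_sum_mul_le hq.2 hq₀.2 (hw a)).trans ?_
    rw [le_div_iff₀ (by positivity : (0 : ℝ) < 2 * k)] at hdist
    rw [div_le_iff₀ two_pos]
    nlinarith
  exact ⟨q, hq, hqk, hsupp, fun a => ⟨hclose hu a, by linarith [abs_le.1 (hclose hv a)]⟩⟩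

section Sampling

variable [Fintype β]

lemma IsMixed.sum_mul_exp_le {ρ : β → ℝ} (hρ : IsMixed ρ) {f : β → ℝ}
    (hf : ∀ b, f b ∈ Set.Icc (0 : ℝ) 1) (s : ℝ) :
    ∑ b, ρ b * exp (s * (f b - ∑ b', ρ b' * f b')) ≤ exp (s ^ 2 / 8) := by
  -- Hoeffding's lemma for `ρ`, viewed as a probability measure on the discrete space `β`.
  let _ : MeasurableSpace β := ⊤
  let P : PMF β := PMF.ofFintype (fun b => ENNReal.ofReal (ρ b)) (by
    rw [← ENNReal.ofReal_sum_of_nonneg fun b _ => hρ.1 b, hρ.2, ENNReal.ofReal_one])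
  have hint (g : β → ℝ) : ∫ b, g b ∂P.toMeasure = ∑ b, ρ b * g b := by
    simp [P, PMF.integral_eq_sum, ENNReal.toReal_ofReal (hρ.1 _)]
  have h := (ProbabilityTheory.hasSubgaussianMGF_of_mem_Icc (μ := P.toMeasure)
    measurable_from_top.aemeasurable (MeasureTheory.ae_of_all _ hf)).mgf_le s
  rw [ProbabilityTheory.mgf, hint, hint] at h
  convert h using 2
  norm_num
  ring

lemma IsMixed.hoeffding_lowerTail {ρ : β → ℝ} (hρ : IsMixed ρ) {f : β → ℝ}
    (hf : ∀ b, f b ∈ Set.Icc (0 : ℝ) 1) {t : ℝ} (ht : 0 ≤ t) (k : ℕ) :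
    ∑ ω ∈ ({ω | ∑ i, f (ω i) < k * (∑ b, ρ b * f b - t)} : Finset (Fin k → β)),
      ∏ i, ρ (ω i) ≤ exp (-(2 * k * t ^ 2)) := by
  set μ := ∑ b, ρ b * f b
  have hW (ω : Fin k → β) : 0 ≤ ∏ i, ρ (ω i) := prod_nonneg fun i _ => hρ.1 (ω i)
  have hexp (ω : Fin k → β) : exp (4 * t * (∑ i, (μ - f (ω i)) - k * t))
      = (∏ i, exp (-(4 * t) * (f (ω i) - μ))) * exp (-(2 * k * t ^ 2)) / exp (2 * t ^ 2) ^ k := by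
    rw [← exp_sum, ← exp_nat_mul, ← exp_add, ← exp_sub]
    simp only [sum_sub_distrib, sum_const, card_univ, Fintype.card_fin, nsmul_eq_mul]
    congr 1
    simp only [← mul_sum, sum_sub_distrib, sum_const, card_univ, Fintype.card_fin, nsmul_eq_mul]
    ring
  -- Markov's inequality for `exp (4t (∑ᵢ (μ - f ωᵢ) - kt))`; the exponent `4t` is optimal.
  calc ∑ ω ∈ ({ω | ∑ i, f (ω i) < k * (μ - t)} : Finset (Fin k → β)), ∏ i, ρ (ω i)
      ≤ ∑ ω ∈ ({ω | ∑ i, f (ω i) < k * (μ - t)} : Finset (Fin k → β)),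
          (∏ i, ρ (ω i)) * exp (4 * t * (∑ i, (μ - f (ω i)) - k * t)) := by
        refine sum_le_sum fun ω hω => le_mul_of_one_le_right (hW ω) (one_le_exp ?_)
        simp only [mem_filter, mem_univ, true_and] at hω
        simp only [sum_sub_distrib, sum_const, card_univ, Fintype.card_fin, nsmul_eq_mul]
        nlinarith
    _ ≤ ∑ ω : Fin k → β, (∏ i, ρ (ω i)) * exp (4 * t * (∑ i, (μ - f (ω i)) - k * t)) :=
        sum_le_sum_of_subset_of_nonneg (subset_univ _) fun ω _ _ =>
          mul_nonneg (hW ω) (exp_pos _).le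
    _ = (∑ b, ρ b * exp (-(4 * t) * (f b - μ))) ^ k * exp (-(2 * k * t ^ 2))
          / exp (2 * t ^ 2) ^ k := by
        rw [Fintype.sum_pow, sum_mul, sum_div]
        refine sum_congr rfl fun ω _ => ?_
        rw [hexp, prod_mul_distrib]
        ring
    _ ≤ exp ((-(4 * t)) ^ 2 / 8) ^ k * exp (-(2 * k * t ^ 2)) / exp (2 * t ^ 2) ^ k := by
        gcongr
        · exact sum_nonneg fun b _ => mul_nonneg (hρ.1 b) (exp_pos _).le
        · exact hρ.sum_mul_exp_le hf _
    _ = exp (-(2 * k * t ^ 2)) := by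
        rw [neg_sq, show (4 * t) ^ 2 / 8 = 2 * t ^ 2 by ring,
          mul_div_cancel_left₀ _ (by positivity)]

lemma exists_ne_zero_forall_notMem {ι C : Type*} [Fintype ι] [Fintype C] {W : ι → ℝ}
    (hW : ∀ x, 0 ≤ W x) (bad : C → Finset ι) (h : ∑ c, ∑ x ∈ bad c, W x < ∑ x, W x) :
    ∃ x, W x ≠ 0 ∧ ∀ c, x ∉ bad c := by
  classical
  by_contra! hall
  refine h.not_ge ?_
  calc ∑ x, W x ≤ ∑ x, ∑ c, if x ∈ bad c then W x else 0 := by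
        refine sum_le_sum fun x _ => ?_
        by_cases hx : W x = 0
        · rw [hx]
          exact sum_nonneg fun c _ => by split_ifs <;> simp
        · obtain ⟨c, hc⟩ := hall x hx
          calc W x = if x ∈ bad c then W x else 0 := (if_pos hc).symm
            _ ≤ _ := single_le_sum (f := fun c => if x ∈ bad c then W x else 0)
                (fun c _ => by split_ifs <;> simp [hW x]) (mem_univ c)
    _ = ∑ c, ∑ x ∈ bad c, W x := by
        rw [sum_comm]
        simp only [sum_ite_mem, univ_inter]

variable [DecidableEq β]

noncomputable def empirical {k : ℕ} (ω : Fin k → β) : β → ℝ :=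
  fun b => (#{i | ω i = b} : ℝ) / k

lemma sum_empirical_mul {k : ℕ} (ω : Fin k → β) (g : β → ℝ) :
    ∑ b, empirical ω b * g b = (∑ i, g (ω i)) / k := by
  rw [← sum_fiberwise' univ ω g, sum_div]
  simp only [empirical, sum_const, nsmul_eq_mul, div_mul_eq_mul_div]

lemma empirical_isMixed {k : ℕ} (hk : 0 < k) (ω : Fin k → β) : IsMixed (empirical ω) := by
  refine ⟨fun b => by unfold empirical; positivity, ?_⟩
  simpa [hk.ne'] using sum_empirical_mul ω 1

lemma IsMixed.exists_kUniform_forall_sub_le_sum_mul {ρ : β → ℝ} (hρ : IsMixed ρ) {C : Type*}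
    [Fintype C] (f : C → β → ℝ) (hf : ∀ c b, f c b ∈ Set.Icc (0 : ℝ) 1) {k : ℕ} (hk : 0 < k)
    {t : ℝ} (ht : 0 ≤ t) (hC : Fintype.card C * exp (-(2 * k * t ^ 2)) < 1) :
    ∃ q : β → ℝ, IsMixed q ∧ KUniform k q ∧ (∀ b, ρ b = 0 → q b = 0) ∧
      ∀ c, ∑ b, ρ b * f c b - t ≤ ∑ b, q b * f c b := by
  have hk' : (0 : ℝ) < k := by exact_mod_cast hk
  obtain ⟨ω, hω, hgood⟩ := exists_ne_zero_forall_notMem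
    (fun ω : Fin k → β => prod_nonneg fun i _ => hρ.1 (ω i))
    (fun c => {ω | ∑ i, f c (ω i) < k * (∑ b, ρ b * f c b - t)}) <| calc
      _ ≤ ∑ _c : C, exp (-(2 * k * t ^ 2)) := sum_le_sum fun c _ =>
          hρ.hoeffding_lowerTail (hf c) ht k
      _ < 1 := by simpa using hC
      _ = ∑ ω : Fin k → β, ∏ i, ρ (ω i) := by rw [← Fintype.sum_pow, hρ.2, one_pow]
  refine ⟨empirical ω, empirical_isMixed hk ω, fun b => ⟨_, rfl⟩, fun b hb => ?_, fun c => ?_⟩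
  · have hωb (i : Fin k) : ω i ≠ b := fun h => prod_ne_zero_iff.1 hω i (mem_univ i) (h ▸ hb)
    simp [empirical, filter_false_of_mem fun i _ => hωb i]
  · have := hgood c
    simp only [mem_filter, mem_univ, true_and, not_lt] at this
    rw [sum_empirical_mul, le_div_iff₀ hk']
    linarith

end Sampling

lemma exists_kUniform_isPayoffApprox_of_exp_lt [Fintype α] [Fintype β] [DecidableEq α]
    [DecidableEq β] {u v : α → β → ℝ} (hu : ∀ a b, u a b ∈ Set.Icc (0 : ℝ) 1)
    (hv : ∀ a b, v a b ∈ Set.Icc (0 : ℝ) 1) {q₀ : β → ℝ} (hq₀ : IsMixed q₀) {k : ℕ} (hk : 0 < k)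
    {δ : ℝ} (hδ : 0 ≤ δ) (hsmall : 3 * Fintype.card α * exp (-(2 * k * δ ^ 2)) < 1) :
    ∃ q, IsMixed q ∧ KUniform k q ∧ IsPayoffApprox u v δ q₀ q := by
  -- Upper deviations of `u` are lower deviations of `1 - u`.
  obtain ⟨q, hq, hqk, hsupp, hdev⟩ := hq₀.exists_kUniform_forall_sub_le_sum_mul
    (C := α ⊕ α ⊕ α) (Sum.elim u (Sum.elim (fun a b => 1 - u a b) v))
    (by rintro (a | a | a) b <;> simp [hu a b, hv a b, (hu a b).1, (hu a b).2]) hk hδ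
    (by convert hsmall using 2; simp only [Fintype.card_sum]; push_cast; ring)
  refine ⟨q, hq, hqk, hsupp, fun a => ?_⟩
  have h1 := hdev (.inl a)
  have h2 := hdev (.inr (.inl a))
  have h3 := hdev (.inr (.inr a))
  simp only [Sum.elim_inl, Sum.elim_inr, mul_sub, mul_one, sum_sub_distrib, hq₀.2, hq.2]
    at h1 h2 h3
  simp only [EU_pureStrat_left, abs_le]
  exact ⟨⟨by linarith, by linarith⟩, by linarith⟩

lemma le_six_mul_log {n : ℕ} (h2 : 2 ≤ n) (h9 : n ≤ 9) : (n : ℝ) ≤ 6 * log n := by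
  have hlog2 := log_two_gt_d9
  have hpow {j : ℕ} (hj : 2 ^ j ≤ n) : j * log 2 ≤ log n := by
    rw [← log_pow]
    exact log_le_log (by positivity) (by exact_mod_cast hj)
  rcases (by omega : (2 ^ 1 ≤ n ∧ n ≤ 4) ∨ (2 ^ 2 ≤ n ∧ n ≤ 8) ∨ (2 ^ 3 ≤ n ∧ n ≤ 9))
    with ⟨hl, hu⟩ | ⟨hl, hu⟩ | ⟨hl, hu⟩ <;>
  · have hlow := hpow hl
    have hup := (Nat.cast_le (α := ℝ)).2 hu
    simp only [Nat.cast_one, Nat.cast_ofNat] at hlow hup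
    linarith

lemma three_mul_mul_exp_lt_one {n k : ℕ} {ε : ℝ} (hn : 10 ≤ n) (hk : 3 * log n ≤ k * ε ^ 2) :
    3 * n * exp (-(2 * k * (ε / 2) ^ 2)) < 1 := by
  have hn' : (10 : ℝ) ≤ n := by exact_mod_cast hn
  have hcube : (n : ℝ) ^ 3 = exp (3 * log n) := by
    rw [show (3 : ℝ) = (3 : ℕ) by norm_num, exp_nat_mul, exp_log (by linarith)]
  have hsq : exp (-(2 * k * (ε / 2) ^ 2)) ^ 2 * n ^ 3 ≤ 1 := by
    rw [hcube, ← exp_nat_mul, ← exp_add, exp_le_one_iff]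
    push_cast
    linarith
  have h3 : (3 * n * exp (-(2 * k * (ε / 2) ^ 2))) ^ 2 * n < 1 * n := by nlinarith
  exact (sq_lt_one_iff₀ (by positivity)).1 (lt_of_mul_lt_mul_right h3 (by positivity))

lemma exists_kUniform_isPayoffApprox {A : Type*} [Fintype A] [DecidableEq A] {u v : A → A → ℝ}
    (hu : ∀ a b, u a b ∈ Set.Icc (0 : ℝ) 1) (hv : ∀ a b, v a b ∈ Set.Icc (0 : ℝ) 1)
    {q₀ : A → ℝ} (hq₀ : IsMixed q₀) (hn : 2 ≤ Fintype.card A) {ε : ℝ} (hε0 : 0 < ε)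
    (hε1 : ε < 1) {k : ℕ} (hk : 3 * log (Fintype.card A) / ε ^ 2 ≤ k) :
    ∃ q, IsMixed q ∧ KUniform k q ∧ IsPayoffApprox u v (ε / 2) q₀ q := by
  have hlog : 0 < log (Fintype.card A) := log_pos (by exact_mod_cast hn)
  have hkε : 3 * log (Fintype.card A) ≤ k * ε ^ 2 := by rwa [div_le_iff₀ (by positivity)] at hk
  have hk0 : 0 < k := Nat.pos_of_ne_zero fun h => by simp [h] at hkε; linarith
  rcases le_or_gt (Fintype.card A) 9 with h9 | h10
  · refine exists_kUniform_isPayoffApprox_of_card_le hu hv hq₀ hk0 ?_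
    have : (k : ℝ) * ε ^ 2 ≤ k * ε := mul_le_mul_of_nonneg_left (by nlinarith) k.cast_nonneg
    linarith [le_six_mul_log hn h9]
  · exact exists_kUniform_isPayoffApprox_of_exp_lt hu hv hq₀ hk0 (by positivity)
      (three_mul_mul_exp_lt_one h10 hkε)

theorem exists_kUniform_apx_envyProof_apx_nash_general
    {A : Type*} [Fintype A] [DecidableEq A]
    (u0 u1 : A → A → ℝ)
    (hn : 2 ≤ Fintype.card A)
    (hbound : ∀ a b : A, u0 a b ∈ Set.Icc (0 : ℝ) 1 ∧ u1 a b ∈ Set.Icc (0 : ℝ) 1)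
    (εef : ℝ)
    (p₀ q₀ : A → ℝ) (hp₀ : IsMixed p₀) (hq₀ : IsMixed q₀)
    (hNash : IsNash u0 u1 p₀ q₀) (hEP : IsEpsEnvyProof u0 u1 εef p₀ q₀)
    (ε : ℝ) (hε0 : 0 < ε) (hε1 : ε < 1)
    (k : ℕ) (hk : 3 * Real.log (Fintype.card A) / ε ^ 2 ≤ (k : ℝ)) :
    ∃ (p q : A → ℝ), IsMixed p ∧ IsMixed q ∧ KUniform k p ∧ KUniform k q ∧
      IsEpsNash u0 u1 ε p q ∧ IsEpsEnvyProof u0 u1 (2 * ε + εef) p q := by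
  obtain ⟨q, hq, hqk, hqA⟩ := exists_kUniform_isPayoffApprox (fun a b => (hbound a b).1)
    (fun a b => (hbound a b).2) hq₀ hn hε0 hε1 hk
  obtain ⟨p, hp, hpk, hpA⟩ := exists_kUniform_isPayoffApprox (u := flip u1) (v := flip u0)
    (fun b a => (hbound a b).2) (fun b a => (hbound a b).1) hp₀ hn hε0 hε1 hk
  exact ⟨p, q, hp, hq, hpk, hqk,
    isEpsNash_and_isEpsEnvyProof_of_isPayoffApprox hp₀ hq₀ hp hq hNash hEP hpA hqA⟩

/-- if a game with common action set of size `n ≥ 2` and `[0,1]`-valued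
utilities admits an `ε_ef`-envy-proof Nash equilibrium, then for every `0 < ε < 1` and
every `k ≥ 3 ln n / ε²` there is a `k`-uniform `(2ε+ε_ef)`-envy-proof `ε`-Nash
equilibrium. -/
theorem exists_kUniform_apx_envyProof_apx_nash
    {A : Type*} [Fintype A] [DecidableEq A] [Nonempty A]
    (u0 u1 : A → A → ℝ)
    (hn : 2 ≤ Fintype.card A)
    (hbound : ∀ a b : A, u0 a b ∈ Set.Icc (0 : ℝ) 1 ∧ u1 a b ∈ Set.Icc (0 : ℝ) 1)
    (εef : ℝ) (hεef : 0 ≤ εef)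
    (p₀ q₀ : A → ℝ) (hp₀ : IsMixed p₀) (hq₀ : IsMixed q₀)
    (hNash : IsNash u0 u1 p₀ q₀) (hEP : IsEpsEnvyProof u0 u1 εef p₀ q₀)
    (ε : ℝ) (hε0 : 0 < ε) (hε1 : ε < 1)
    (k : ℕ) (hk : 3 * Real.log (Fintype.card A) / ε ^ 2 ≤ (k : ℝ)) :
    ∃ (p q : A → ℝ), IsMixed p ∧ IsMixed q ∧ KUniform k p ∧ KUniform k q ∧
      IsEpsNash u0 u1 ε p q ∧ IsEpsEnvyProof u0 u1 (2 * ε + εef) p q :=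
  exists_kUniform_apx_envyProof_apx_nash_general u0 u1 hn hbound εef p₀ q₀ hp₀ hq₀ hNash hEP ε hε0
    hε1 k hk
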